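/- arXiv:1404.1631 — 2 statements merged into one kernel-verified Lean document; each statement's English description precedes it below -/
import Mathlib

section
/- Let (γ_n)_{n≥0} be a sequence of real numbers, let T : ℝ[x] → ℝ[x] be the linear operator determined by T[H_n] = γ_n H_n for every n, let (Q_k)_{k≥0} be the differential coefficients of T, and set g_k*(−1) = Σ_{j=0}^{k} C(k,j) (−1)^{k−j} γ_j. Then for each m ∈ ℕ₀: Q_m(x) = Σ_{k=0}^{⌊m/2⌋} ((−1)^k/(k! 2^k)) ( Σ_{j=0}^{k} C(k,j) g_{m−k+j}*(−1)/2^{j} ) · x^{m−2k}/(m−2k)!. -/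
/-!
Differential coefficients are unique: if `deg pₙ = n` for every `n`, the identities
`T pₙ = ∑_{k ≤ n} Q_k pₙ⁽ᵏ⁾` determine `Q_n` recursively, because `pₙ⁽ⁿ⁾` is a non-zero constant.
So it suffices to check the closed form against `T Hₙ = γₙ Hₙ`, using `Hₙ⁽ᵏ⁾ = 2ᵏ n⋯(n-k+1) Hₙ₋ₖ`
and, by binomial inversion, `γₙ = ∑ₛ C(n,s) gₛ`. Comparing coefficients of `x^(n-2t)` leaves the
identity `∑ C(t,i) C(N,r) C(i,j) 2^(i-j) g_(i+r+j) = ∑ₛ C(N+2t,s) gₛ`, which is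
`(x(x+2)+1)ᵗ (x+1)ᴺ = (x+1)^(N+2t)` read through the linear functional `xⁿ ↦ gₙ`.
-/

open Polynomial Finset

noncomputable section

/-- The physicists' Hermite polynomials. -/
def hermitePoly (n : ℕ) : Polynomial ℝ :=
  ∑ k ∈ Finset.range (n / 2 + 1),
    Polynomial.C ((-1 : ℝ) ^ k * n.factorial * 2 ^ (n - 2 * k) /
      (k.factorial * (n - 2 * k).factorial)) * Polynomial.X ^ (n - 2 * k)

/-- The Laguerre polynomials. -/
def laguerrePoly (n : ℕ) : Polynomial ℝ :=
  ∑ k ∈ Finset.range (n + 1),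
    Polynomial.C ((-1 : ℝ) ^ k / k.factorial * n.choose k) * Polynomial.X ^ k

/-- A real polynomial is hyperbolic if all of its complex roots are real
(the zero polynomial counts as hyperbolic). -/
def Hyperbolic (p : Polynomial ℝ) : Prop :=
  p = 0 ∨ ∀ z : ℂ, Polynomial.aeval z p = 0 → z.im = 0

/-- A linear operator on ℝ[x] preserves hyperbolicity. -/
def HypPreserving (T : Polynomial ℝ →ₗ[ℝ] Polynomial ℝ) : Prop :=
  ∀ p : Polynomial ℝ, Hyperbolic p → Hyperbolic (T p)

/-- Classical multiplier sequence. -/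
def ClassicalMS (γ : ℕ → ℝ) : Prop :=
  ∃ T : Polynomial ℝ →ₗ[ℝ] Polynomial ℝ,
    (∀ n, T (Polynomial.X ^ n) = γ n • Polynomial.X ^ n) ∧ HypPreserving T

/-- Hermite multiplier sequence. -/
def HermiteMS (γ : ℕ → ℝ) : Prop :=
  ∃ T : Polynomial ℝ →ₗ[ℝ] Polynomial ℝ,
    (∀ n, T (hermitePoly n) = γ n • hermitePoly n) ∧ HypPreserving T

/-- Laguerre multiplier sequence. -/
def LaguerreMS (γ : ℕ → ℝ) : Prop :=
  ∃ T : Polynomial ℝ →ₗ[ℝ] Polynomial ℝ,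
    (∀ n, T (laguerrePoly n) = γ n • laguerrePoly n) ∧ HypPreserving T

/-- A sequence is trivial if all entries vanish except possibly two at consecutive indices. -/
def TrivialSeq (γ : ℕ → ℝ) : Prop :=
  ∃ m : ℕ, ∀ n, n ≠ m → n ≠ m + 1 → γ n = 0

namespace Polynomial

section Umbral

variable {R : Type*} [CommSemiring R]

/-- `X ^ n ↦ f n`, extended linearly. -/
def umbral (f : ℕ → R) : R[X] →ₗ[R] R :=
  lsum fun n => LinearMap.mulRight R (f n)

theorem umbral_C_mul (f : ℕ → R) (a : R) (p : R[X]) : umbral f (C a * p) = a * umbral f p := by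
  rw [← smul_eq_C_mul, map_smul, smul_eq_mul]

theorem umbral_C_mul_X_pow (f : ℕ → R) (a : R) (n : ℕ) : umbral f (C a * X ^ n) = a * f n := by
  rw [umbral, lsum_apply, C_mul_X_pow_eq_monomial, sum_monomial_index] <;> simp

theorem umbral_X_pow (f : ℕ → R) (n : ℕ) : umbral f (X ^ n) = f n := by
  simpa using umbral_C_mul_X_pow f 1 n

theorem umbral_X_pow_mul (f : ℕ → R) (k : ℕ) (p : R[X]) :
    umbral f (X ^ k * p) = umbral (fun n => f (k + n)) p := by
  induction p using Polynomial.induction_on' with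
  | add p q hp hq => rw [mul_add, map_add, map_add, hp, hq]
  | monomial n a =>
    rw [← C_mul_X_pow_eq_monomial, mul_left_comm, ← pow_add, umbral_C_mul_X_pow,
      umbral_C_mul_X_pow]

theorem umbral_add_C_pow (f : ℕ → R) (p : R[X]) (a : R) (s : ℕ) :
    umbral f ((p + C a) ^ s) =
      ∑ j ∈ range (s + 1), (s.choose j : R) * a ^ (s - j) * umbral f (p ^ j) := by
  rw [add_pow, map_sum]
  refine sum_congr rfl fun j _ => ?_
  rw [← C_pow, ← map_natCast C, mul_assoc, ← C_mul, mul_comm, umbral_C_mul, mul_comm (a ^ _)]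

end Umbral

theorem sum_choose_mul_eq_of_eq_sum_choose_mul_neg_one_pow {R : Type*} [CommRing R]
    {γ g : ℕ → R} (hg : ∀ k, g k = ∑ j ∈ range (k + 1), (k.choose j : R) * (-1) ^ (k - j) * γ j)
    (n : ℕ) : ∑ s ∈ range (n + 1), (n.choose s : R) * g s = γ n := by
  have hX : (X + C (-1) + C 1 : R[X]) = X := by simp
  calc ∑ s ∈ range (n + 1), (n.choose s : R) * g s
      = ∑ s ∈ range (n + 1), (n.choose s : R) * 1 ^ (n - s) * umbral γ ((X + C (-1)) ^ s) := by
        simp only [hg, umbral_add_C_pow, umbral_X_pow, one_pow, mul_one]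
    _ = γ n := by rw [← umbral_add_C_pow, hX, umbral_X_pow]

theorem sum_choose_mul_choose_mul_sum_choose_mul_two_pow {R : Type*} [CommSemiring R]
    (f : ℕ → R) (t N : ℕ) :
    ∑ i ∈ range (t + 1), ∑ r ∈ range (N + 1), (t.choose i : R) * N.choose r *
        ∑ j ∈ range (i + 1), (i.choose j : R) * 2 ^ (i - j) * f (i + r + j) =
      ∑ s ∈ range (2 * t + N + 1), ((2 * t + N).choose s : R) * f s := by
  have hsq : (X + C 1 : R[X]) ^ (2 * t + N) = (X * (X + C 2) + C 1) ^ t * (X + C 1) ^ N := by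
    rw [pow_add, pow_mul, C_1, map_ofNat C 2]; ring
  have rhs := umbral_add_C_pow f X 1 (2 * t + N)
  simp only [one_pow, mul_one, umbral_X_pow] at rhs
  rw [← rhs, hsq, add_pow, add_pow, sum_mul_sum, map_sum]
  refine sum_congr rfl fun i _ => ?_
  rw [map_sum]
  refine sum_congr rfl fun r _ => ?_
  rw [show (X * (X + C 2)) ^ i * C 1 ^ (t - i) * (t.choose i : R[X]) *
        (X ^ r * C 1 ^ (N - r) * (N.choose r : R[X])) =
        C ((t.choose i : R) * N.choose r) * (X ^ (i + r) * (X + C 2) ^ i) by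
      simp only [C_1, one_pow, mul_one, C_mul, map_natCast, mul_pow]; ring,
    umbral_C_mul, umbral_X_pow_mul, umbral_add_C_pow]
  simp only [umbral_X_pow]

section Uniqueness

variable {R : Type*} [CommRing R] [IsDomain R] [CharZero R]

theorem iterate_derivative_natDegree_ne_zero {p : R[X]} (hp : p ≠ 0) :
    derivative^[p.natDegree] p ≠ 0 := by
  intro h0
  have h00 := congrArg (coeff · 0) h0
  simp only [coeff_iterate_derivative, zero_add, Nat.descFactorial_self, coeff_zero] at h00
  exact smul_ne_zero (Nat.factorial_ne_zero _) (leadingCoeff_ne_zero.2 hp) h00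

theorem eq_of_sum_mul_iterate_derivative_eq {Q Q' : ℕ → R[X]} (p : ℕ → R[X])
    (hp : ∀ n, (p n).degree = n)
    (h : ∀ n, ∑ k ∈ range (n + 1), Q k * derivative^[k] (p n) =
      ∑ k ∈ range (n + 1), Q' k * derivative^[k] (p n)) :
    Q = Q' := by
  funext m
  induction m using Nat.strong_induction_on with
  | _ m ih =>
    have hm := h m
    rw [sum_range_succ, sum_range_succ,
      sum_congr rfl fun k hk => by rw [ih k (mem_range.1 hk)], add_right_inj] at hm
    have hpm : p m ≠ 0 := fun h0 => by simpa [h0] using hp m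
    have hD := iterate_derivative_natDegree_ne_zero hpm
    rw [natDegree_eq_of_degree_eq_some (hp m)] at hD
    exact mul_right_cancel₀ hD hm

end Uniqueness

end Polynomial

/-- The substitution `t = i + l`, `r = k - 2 * i`. -/
theorem Finset.sum_range_triple_regroup {M : Type*} [AddCommMonoid M] (m : ℕ)
    (F : ℕ → ℕ → ℕ → M) :
    ∑ k ∈ range (m + 1), ∑ i ∈ range (k / 2 + 1), ∑ l ∈ range ((m - k) / 2 + 1), F k i l =
      ∑ t ∈ range (m / 2 + 1), ∑ i ∈ range (t + 1), ∑ r ∈ range (m - 2 * t + 1),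
        F (r + 2 * i) i (t - i) := by
  simp only [sum_sigma']
  refine sum_nbij' (fun x => ⟨x.2.1 + x.2.2, x.2.1, x.1 - 2 * x.2.1⟩)
    (fun y => ⟨y.2.2 + 2 * y.2.1, y.2.1, y.1 - y.2.1⟩) ?_ ?_ ?_ ?_ ?_
  · rintro ⟨k, i, l⟩ h
    simp only [mem_sigma, mem_range] at h ⊢
    omega
  · rintro ⟨t, i, r⟩ h
    simp only [mem_sigma, mem_range] at h ⊢
    omega
  · rintro ⟨k, i, l⟩ h
    simp only [mem_sigma, mem_range] at h
    rw [show k - 2 * i + 2 * i = k by omega, Nat.add_sub_cancel_left]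
  · rintro ⟨t, i, r⟩ h
    simp only [mem_sigma, mem_range] at h
    rw [show i + (t - i) = t by omega, Nat.add_sub_cancel]
  · rintro ⟨k, i, l⟩ h
    simp only [mem_sigma, mem_range] at h
    rw [show k - 2 * i + 2 * i = k by omega, Nat.add_sub_cancel_left]

def hermiteCoeff (n l : ℕ) : ℝ :=
  (-1) ^ l * n.factorial * 2 ^ (n - 2 * l) / (l.factorial * (n - 2 * l).factorial)

theorem hermitePoly_eq_sum (n : ℕ) :
    hermitePoly n = ∑ l ∈ range (n / 2 + 1), C (hermiteCoeff n l) * X ^ (n - 2 * l) :=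
  rfl

theorem hermitePoly_zero : hermitePoly 0 = 1 := by
  simp [hermitePoly]

theorem coeff_hermitePoly_self (n : ℕ) : (hermitePoly n).coeff n = 2 ^ n := by
  rw [hermitePoly_eq_sum, finsetSum_coeff, sum_eq_single 0]
  · rw [Nat.mul_zero, Nat.sub_zero, coeff_C_mul_X_pow, if_pos rfl]
    simp [hermiteCoeff, n.factorial_ne_zero]
  · intro l hl hl0
    rw [mem_range] at hl
    rw [coeff_C_mul_X_pow, if_neg (by omega)]
  · simp

theorem natDegree_hermitePoly (n : ℕ) : (hermitePoly n).natDegree = n := by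
  refine natDegree_eq_of_le_of_coeff_ne_zero ?_ (by simp [coeff_hermitePoly_self])
  exact natDegree_sum_le_of_forall_le _ _ fun l _ =>
    (natDegree_C_mul_X_pow_le _ _).trans (Nat.sub_le _ _)

theorem degree_hermitePoly (n : ℕ) : (hermitePoly n).degree = n :=
  degree_eq_of_le_of_coeff_ne_zero (natDegree_le_iff_degree_le.1 (natDegree_hermitePoly n).le)
    (by simp [coeff_hermitePoly_self])

theorem hermiteCoeff_succ_mul {n l : ℕ} (hl : 2 * l ≤ n) :
    hermiteCoeff (n + 1) l * ((n + 1 - 2 * l : ℕ) : ℝ) = 2 * (n + 1) * hermiteCoeff n l := by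
  obtain ⟨e, rfl⟩ := Nat.exists_eq_add_of_le hl
  simp only [hermiteCoeff, show 2 * l + e + 1 - 2 * l = e + 1 by omega,
    show 2 * l + e - 2 * l = e by omega, Nat.factorial_succ]
  push_cast
  field_simp
  ring

theorem derivative_hermitePoly_succ (n : ℕ) :
    derivative (hermitePoly (n + 1)) = C (2 * (n + 1) : ℝ) * hermitePoly n := by
  rw [hermitePoly_eq_sum, hermitePoly_eq_sum, derivative_sum, mul_sum,
    ← sum_subset (range_subset_range.2 (by omega : n / 2 + 1 ≤ (n + 1) / 2 + 1))]
  · refine sum_congr rfl fun l hln => ?_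
    have hl : 2 * l ≤ n := by rw [mem_range] at hln; omega
    rw [derivative_C_mul_X_pow, hermiteCoeff_succ_mul hl, C_mul, mul_assoc,
      show n + 1 - 2 * l - 1 = n - 2 * l by omega]
  · intro l hl hl'
    simp only [mem_range] at hl hl'
    rw [show n + 1 - 2 * l = 0 by omega]
    simp

theorem iterate_derivative_hermitePoly (m k : ℕ) :
    derivative^[k] (hermitePoly m) = C (2 ^ k * m.descFactorial k : ℝ) * hermitePoly (m - k) := by
  induction k with
  | zero => simp
  | succ k ih =>
    rw [Function.iterate_succ_apply', ih, derivative_C_mul, Nat.descFactorial_succ]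
    rcases h : m - k with _ | e
    · simp [hermitePoly_zero]
    · rw [show m - (k + 1) = e by omega, derivative_hermitePoly_succ, ← mul_assoc, ← C_mul]
      push_cast
      congr 2
      ring

def hermiteDiffCoeffTerm (g : ℕ → ℝ) (m k : ℕ) : ℝ :=
  ((-1 : ℝ) ^ k / (k.factorial * 2 ^ k)) *
    (∑ j ∈ range (k + 1), (k.choose j : ℝ) * g (m - k + j) / 2 ^ j) / (m - 2 * k).factorial

def hermiteDiffCoeff (g : ℕ → ℝ) (m : ℕ) : ℝ[X] :=
  ∑ k ∈ range (m / 2 + 1), C (hermiteDiffCoeffTerm g m k) * X ^ (m - 2 * k)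

theorem hermiteDiffCoeffTerm_mul_hermiteCoeff (g : ℕ → ℝ) (i u r v : ℕ) :
    hermiteDiffCoeffTerm g (r + 2 * i) i *
        (2 ^ (r + 2 * i) * (r + v + 2 * i + 2 * u).descFactorial (r + 2 * i)) *
        hermiteCoeff (v + 2 * u) u =
      hermiteCoeff (r + v + 2 * i + 2 * u) (i + u) *
        ((i + u).choose i * (r + v).choose r *
          ∑ j ∈ range (i + 1), (i.choose j : ℝ) * 2 ^ (i - j) * g (i + r + j)) := by
  set S := ∑ j ∈ range (i + 1), (i.choose j : ℝ) * g (r + i + j) / 2 ^ j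
  have hS : ∑ j ∈ range (i + 1), (i.choose j : ℝ) * 2 ^ (i - j) * g (i + r + j) = 2 ^ i * S := by
    rw [mul_sum]
    refine sum_congr rfl fun j hj => ?_
    rw [pow_sub₀ _ two_ne_zero (by rw [mem_range] at hj; omega), add_comm i r]
    ring
  have hdesc : ((r + v + 2 * i + 2 * u).descFactorial (r + 2 * i) : ℝ) =
      (r + v + 2 * i + 2 * u).factorial / (v + 2 * u).factorial := by
    rw [eq_div_iff (by positivity), mul_comm]
    exact_mod_cast (show r + v + 2 * i + 2 * u - (r + 2 * i) = v + 2 * u by omega) ▸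
      Nat.factorial_mul_descFactorial (by omega)
  simp only [hermiteDiffCoeffTerm, hermiteCoeff, hS, hdesc,
    Nat.cast_choose ℝ (Nat.le_add_right i u), Nat.cast_choose ℝ (Nat.le_add_right r v),
    show r + 2 * i - i = r + i by omega,
    show r + 2 * i - 2 * i = r by omega, show v + 2 * u - 2 * u = v by omega,
    show r + v + 2 * i + 2 * u - 2 * (i + u) = r + v by omega, Nat.add_sub_cancel_left]
  field_simp
  ring

theorem sum_hermiteDiffCoeffTerm_mul_hermiteCoeff (g : ℕ → ℝ) {m t : ℕ} (ht : 2 * t ≤ m) :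
    ∑ i ∈ range (t + 1), ∑ r ∈ range (m - 2 * t + 1),
        hermiteDiffCoeffTerm g (r + 2 * i) i * (2 ^ (r + 2 * i) * m.descFactorial (r + 2 * i)) *
          hermiteCoeff (m - (r + 2 * i)) (t - i) =
      hermiteCoeff m t * ∑ s ∈ range (m + 1), (m.choose s : ℝ) * g s := by
  obtain ⟨N, rfl⟩ := Nat.exists_eq_add_of_le ht
  rw [← sum_choose_mul_choose_mul_sum_choose_mul_two_pow, mul_sum, Nat.add_sub_cancel_left]
  refine sum_congr rfl fun i hi => ?_
  rw [mul_sum]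
  refine sum_congr rfl fun r hr => ?_
  obtain ⟨u, rfl⟩ := Nat.exists_eq_add_of_le (Nat.le_of_lt_succ (mem_range.1 hi))
  obtain ⟨v, rfl⟩ := Nat.exists_eq_add_of_le (Nat.le_of_lt_succ (mem_range.1 hr))
  rw [show 2 * (i + u) + (r + v) = r + v + 2 * i + 2 * u by ring,
    show r + v + 2 * i + 2 * u - (r + 2 * i) = v + 2 * u by omega, Nat.add_sub_cancel_left,
    hermiteDiffCoeffTerm_mul_hermiteCoeff]

theorem sum_hermiteDiffCoeff_mul_iterate_derivative_hermitePoly (g : ℕ → ℝ) (m : ℕ) :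
    ∑ k ∈ range (m + 1), hermiteDiffCoeff g k * derivative^[k] (hermitePoly m) =
      (∑ s ∈ range (m + 1), (m.choose s : ℝ) * g s) • hermitePoly m := by
  have expand : ∀ k, hermiteDiffCoeff g k * derivative^[k] (hermitePoly m) =
      ∑ i ∈ range (k / 2 + 1), ∑ l ∈ range ((m - k) / 2 + 1),
        C (hermiteDiffCoeffTerm g k i * (2 ^ k * m.descFactorial k) * hermiteCoeff (m - k) l) *
          X ^ (k - 2 * i + (m - k - 2 * l)) := by
    intro k
    rw [iterate_derivative_hermitePoly, hermiteDiffCoeff, hermitePoly_eq_sum, sum_mul]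
    refine sum_congr rfl fun i _ => ?_
    rw [mul_sum, mul_sum]
    refine sum_congr rfl fun l _ => ?_
    simp only [map_mul, pow_add]
    ring
  rw [sum_congr rfl fun k _ => expand k, sum_range_triple_regroup, hermitePoly_eq_sum, smul_sum]
  refine sum_congr rfl fun t htm => ?_
  have ht : 2 * t ≤ m := by rw [mem_range] at htm; omega
  rw [smul_eq_C_mul, ← mul_assoc, ← C_mul, mul_comm _ (hermiteCoeff m t),
    ← sum_hermiteDiffCoeffTerm_mul_hermiteCoeff g ht, map_sum, sum_mul]
  refine sum_congr rfl fun i hi => ?_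
  rw [map_sum, sum_mul]
  refine sum_congr rfl fun r hr => ?_
  simp only [mem_range] at hi hr
  rw [show r + 2 * i - 2 * i + (m - (r + 2 * i) - 2 * (t - i)) = m - 2 * t by omega]

/-- the explicit formula for the differential coefficients of a Hermite
diagonal differential operator. -/
theorem stmt_8 (γ : ℕ → ℝ)
    (T : Polynomial ℝ →ₗ[ℝ] Polynomial ℝ)
    (hT : ∀ n, T (hermitePoly n) = γ n • hermitePoly n)
    (Q : ℕ → Polynomial ℝ)
    (hQ : ∀ p : Polynomial ℝ,
      T p = ∑ k ∈ Finset.range (p.natDegree + 1), Q k * (Polynomial.derivative^[k] p))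
    (g : ℕ → ℝ)
    (hg : ∀ k, g k = ∑ j ∈ Finset.range (k + 1), (k.choose j : ℝ) * (-1) ^ (k - j) * γ j) :
    ∀ m : ℕ, Q m = ∑ k ∈ Finset.range (m / 2 + 1),
      Polynomial.C (((-1 : ℝ) ^ k / (k.factorial * 2 ^ k)) *
          (∑ j ∈ Finset.range (k + 1), (k.choose j : ℝ) * g (m - k + j) / 2 ^ j) /
          (m - 2 * k).factorial) *
        Polynomial.X ^ (m - 2 * k) := by
  have hQ_eq : Q = hermiteDiffCoeff g := by
    refine eq_of_sum_mul_iterate_derivative_eq hermitePoly degree_hermitePoly fun n => ?_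
    rw [sum_hermiteDiffCoeff_mul_iterate_derivative_hermitePoly,
      sum_choose_mul_eq_of_eq_sum_choose_mul_neg_one_pow hg, ← hT, hQ, natDegree_hermitePoly]
  intro m
  rw [hQ_eq]
  rfl
end
end

section
/- Let (γ_n)_{n≥0} be a sequence of real numbers, let T : ℝ[x] → ℝ[x] be the linear operator determined by T[L_n] = γ_n L_n for every n, and let (Q_k)_{k≥0} be the differential coefficients of T. Then for each n ∈ ℕ₀: Q_n(x) = Σ_{k=0}^{n} ((−x)^k/k!) Σ_{j=0}^{n−k} C(n−k, j) (−1)^j γ_j L_j(x). -/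
open Polynomial Finset

noncomputable section

/-!
Evaluating `T[(x - a)^n] = ∑ₖ Qₖ · n!/(n-k)! · (x - a)^(n-k)` at `x = a` isolates `n! Qₙ(a)`;
expanding `(x - a)^n` binomially instead gives `Qₙ = ∑ₖ ((-x)^k/k!) T[x^(n-k)/(n-k)!]`.
It remains to invert `Lⱼ = ∑ᵢ C(j,i) (-x)^i/i!`, i.e. `x^m/m! = ∑ⱼ C(m,j) (-1)^j Lⱼ`,
and to apply `T`.
-/

theorem factorial_mul_eval_of_diffCoeff {R : Type*} [CommRing R] [Nontrivial R]
    {T : R[X] →ₗ[R] R[X]} {Q : ℕ → R[X]}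
    (hQ : ∀ p : R[X], T p = ∑ k ∈ range (p.natDegree + 1), Q k * derivative^[k] p)
    (n : ℕ) (a : R) :
    n.factorial * (Q n).eval a = (T ((X - C a) ^ n)).eval a := by
  rw [hQ, (monic_X_sub_C a).natDegree_pow, natDegree_X_sub_C, mul_one, eval_finsetSum,
    sum_eq_single_of_mem n (self_mem_range_succ n)]
  · simp [iterate_derivative_X_sub_pow_self, mul_comm]
  · intro k hk hkn
    have : n - k ≠ 0 := by have := mem_range.mp hk; omega
    simp [iterate_derivative_X_sub_pow, this]

theorem diffCoeff_eq_sum_monomial {K : Type*} [Field K] [CharZero K]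
    {T : K[X] →ₗ[K] K[X]} {Q : ℕ → K[X]}
    (hQ : ∀ p : K[X], T p = ∑ k ∈ range (p.natDegree + 1), Q k * derivative^[k] p) (n : ℕ) :
    Q n = ∑ k ∈ range (n + 1),
      C (1 / k.factorial : K) * (-X) ^ k * T (C (1 / (n - k).factorial : K) * X ^ (n - k)) := by
  refine Polynomial.funext fun a ↦ ?_
  have hexp : (X - C a) ^ n = ∑ k ∈ range (n + 1), C ((-a) ^ k * n.choose k) * X ^ (n - k) := by
    rw [sub_eq_neg_add, ← C_neg, add_pow]
    simp [mul_comm, mul_left_comm]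
  rw [← mul_right_inj' (Nat.cast_ne_zero.2 n.factorial_ne_zero),
    factorial_mul_eval_of_diffCoeff hQ, hexp, map_sum, eval_finsetSum, eval_finsetSum, mul_sum]
  refine sum_congr rfl fun k hk ↦ ?_
  have hk : k ≤ n := Nat.lt_succ_iff.mp (mem_range.mp hk)
  simp only [← smul_eq_C_mul, map_smul, eval_smul, eval_mul, eval_pow, eval_neg, eval_X,
    smul_eq_mul, Nat.cast_choose K hk]
  field_simp

theorem coeff_laguerrePoly (n i : ℕ) :
    (laguerrePoly n).coeff i = (-1) ^ i / i.factorial * n.choose i := by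
  rw [laguerrePoly, finsetSum_coeff]
  simp only [coeff_C_mul_X_pow]
  rw [sum_ite_eq]
  split_ifs with h
  · rfl
  · rw [Nat.choose_eq_zero_of_lt (by simpa using h)]
    simp

theorem sum_choose_mul_neg_one_pow_mul_choose {R : Type*} [CommRing R] (m i : ℕ) :
    ∑ j ∈ range (m + 1), (m.choose j : R) * (-1) ^ j * (j.choose i : R) =
      if i = m then (-1) ^ m else 0 := by
  have h : ∑ j ∈ range (m + 1), C ((m.choose j : R) * (-1) ^ j) * (X + 1) ^ j =
      C ((-1) ^ m) * X ^ m := by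
    rw [C_pow, C_neg, C_1, ← mul_pow, show -1 * X = -(X + 1) + (1 : R[X]) by ring, add_pow]
    refine sum_congr rfl fun j _ ↦ ?_
    rw [neg_pow (X + 1 : R[X]), one_pow, mul_one, C_mul, C_pow, C_neg, C_1, map_natCast]
    ring
  have := congrArg (coeff · i) h
  simpa only [finsetSum_coeff, coeff_C_mul, coeff_X_add_one_pow, coeff_X_pow, mul_ite, mul_one,
    mul_zero] using this

theorem C_one_div_factorial_mul_X_pow_eq_sum_laguerrePoly (m : ℕ) :
    C (1 / m.factorial : ℝ) * X ^ m =
      ∑ j ∈ range (m + 1), C ((m.choose j : ℝ) * (-1) ^ j) * laguerrePoly j := by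
  ext i
  have hsum := sum_choose_mul_neg_one_pow_mul_choose (R := ℝ) m i
  simp only [coeff_C_mul, coeff_X_pow, finsetSum_coeff, coeff_laguerrePoly]
  calc (1 / m.factorial : ℝ) * (if i = m then 1 else 0)
      = (-1) ^ i / i.factorial * (if i = m then (-1 : ℝ) ^ m else 0) := by
        split_ifs with h
        · subst h; field_simp; rw [← pow_mul, pow_mul', neg_one_sq, one_pow]
        · simp
    _ = _ := by rw [← hsum, mul_sum]; exact sum_congr rfl fun j _ ↦ by ring

theorem map_C_one_div_factorial_mul_X_pow {T : ℝ[X] →ₗ[ℝ] ℝ[X]} {γ : ℕ → ℝ}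
    (hT : ∀ n, T (laguerrePoly n) = γ n • laguerrePoly n) (m : ℕ) :
    T (C (1 / m.factorial : ℝ) * X ^ m) =
      ∑ j ∈ range (m + 1), C ((m.choose j : ℝ) * (-1) ^ j * γ j) * laguerrePoly j := by
  rw [C_one_div_factorial_mul_X_pow_eq_sum_laguerrePoly, map_sum]
  refine sum_congr rfl fun j _ ↦ ?_
  rw [← smul_eq_C_mul, map_smul, hT, smul_smul, smul_eq_C_mul]

/-- the second explicit formula for the differential coefficients of a
Laguerre diagonal differential operator. -/
theorem stmt_19 (γ : ℕ → ℝ)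
    (T : Polynomial ℝ →ₗ[ℝ] Polynomial ℝ)
    (hT : ∀ n, T (laguerrePoly n) = γ n • laguerrePoly n)
    (Q : ℕ → Polynomial ℝ)
    (hQ : ∀ p : Polynomial ℝ,
      T p = ∑ k ∈ Finset.range (p.natDegree + 1), Q k * (Polynomial.derivative^[k] p)) :
    ∀ n : ℕ, Q n = ∑ k ∈ Finset.range (n + 1),
      Polynomial.C ((1 : ℝ) / k.factorial) * (-Polynomial.X) ^ k *
        ∑ j ∈ Finset.range (n - k + 1),
          Polynomial.C (((n - k).choose j : ℝ) * (-1) ^ j * γ j) * laguerrePoly j := by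
  intro n
  rw [diffCoeff_eq_sum_monomial hQ]
  exact sum_congr rfl fun k _ ↦ by rw [map_C_one_div_factorial_mul_X_pow hT]
end
end
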